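/- Let d, k, p be positive integers with p ≤ k − 1. There exists a measurable set à ⊆ (ℝ^d)^{k−1} with positive upper Banach density δ̄_{(k−1)d}(Ã) > 0 such that whenever x_1, …, x_{k−1}, s ∈ ℝ^d satisfy (x_1,…,x_{k−1}) ∈ Ã, and (x_1,…,x_i + s,…,x_{k−1}) ∈ à for every i = 1,…,k−1 (the i-th coordinate shifted by s), the value ‖s‖_{ℓ^p} does not belong to ⋃_{n=1}^{∞} ( ((4n−3)/(4·p!))^{1/p}, ((4n−1)/(4·p!))^{1/p} ); in particular, for every λ₀ > 0 there is some λ ≥ λ₀ which is not the ℓ^p side length of any generalized k-element corner in Ã. -/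

import Mathlib

open MeasureTheory Filter
open scoped ENNReal

/-- The `ℓ^p` norm of a vector in `ℝ^d`. -/
noncomputable def lpNorm {d : ℕ} (p : ℝ) (s : Fin d → ℝ) : ℝ :=
  (∑ i, |s i| ^ p) ^ (1 / p)

/-- Upper Banach density of a subset of `(ℝ^d)^m ≅ ℝ^{md}`. -/
noncomputable def upperBanachDensityPi (m d : ℕ) (A : Set (Fin m → Fin d → ℝ)) : ℝ≥0∞ :=
  Filter.limsup (fun N : ℝ =>
    ⨆ x : Fin m → Fin d → ℝ,
      volume (A ∩ {y : Fin m → Fin d → ℝ | ∀ i, y i ∈ Set.Icc (x i) (x i + fun _ => N)}) /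
        ENNReal.ofReal (N ^ (m * d))) Filter.atTop

/-!
Let `A` be the set of `X` whose weighted sum `u = ∑ i, (i + 1) • X i` has, for every choice of
signs `ε`, the number `∑ j, (ε j * u j) ^ p` within `δ` of an integer. A corner of side `s` in `A`
puts `u, u + s, …, u + p • s` into this set of `u`; with `ε` the signs of `s`, the `p`-th forward
difference of `t ↦ ∑ j, (ε j * (u + t • s) j) ^ p` is `p! * ‖s‖ₚ ^ p`, which is therefore within
`2 ^ p * δ ≤ 1 / 4` of an integer, and this is what the gaps exclude.

`A` has positive upper Banach density because it contains every `X` for which each coordinate of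
`u` lies in a band `[n ^ (1/p), (n + η) ^ (1/p)]` with `d * η ≤ δ`. By concavity of `x ↦ x ^ (1/p)`
these bands fill a proportion about `η` of every long interval, and integrating over
`X 1, …, X (m - 1)` (Fubini) gives density at least `(η / 2) ^ d`.
-/

open Set Function Nat fwdDiff

def NearInt (δ x : ℝ) : Prop := ∃ z : ℤ, |x - z| ≤ δ

namespace NearInt

variable {δ ε x y : ℝ}

lemma mono (h : NearInt δ x) (hδε : δ ≤ ε) : NearInt ε x :=
  let ⟨z, hz⟩ := h
  ⟨z, hz.trans hδε⟩

lemma add (hx : NearInt δ x) (hy : NearInt ε y) : NearInt (δ + ε) (x + y) := by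
  obtain ⟨a, ha⟩ := hx
  obtain ⟨b, hb⟩ := hy
  refine ⟨a + b, ?_⟩
  calc |x + y - ↑(a + b)| = |(x - a) + (y - b)| := by push_cast; ring_nf
    _ ≤ δ + ε := (abs_add_le _ _).trans (add_le_add ha hb)

lemma sub (hx : NearInt δ x) (hy : NearInt ε y) : NearInt (δ + ε) (x - y) := by
  obtain ⟨a, ha⟩ := hx
  obtain ⟨b, hb⟩ := hy
  refine ⟨a - b, ?_⟩
  calc |x - y - ↑(a - b)| = |(x - a) - (y - b)| := by push_cast; ring_nf
    _ ≤ δ + ε := (abs_sub _ _).trans (add_le_add ha hb)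

lemma finsetSum {ι : Type*} (s : Finset ι) {f : ι → ℝ} (h : ∀ i ∈ s, NearInt δ (f i)) :
    NearInt (s.card * δ) (∑ i ∈ s, f i) := by
  classical
  induction s using Finset.induction_on with
  | empty => exact ⟨0, by simp⟩
  | insert i s hi ih =>
    rw [Finset.sum_insert hi, Finset.card_insert_of_notMem hi, Nat.cast_succ, add_mul, one_mul,
      add_comm]
    exact (h i (by simp)).add (ih fun j hj => h j (by simp [hj]))

lemma signType_mul (h : NearInt δ x) (σ : SignType) : NearInt δ (σ * x) := by
  obtain ⟨z, hz⟩ := h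
  refine ⟨σ * z, ?_⟩
  have hσ : |(σ : ℝ)| ≤ 1 := by cases σ <;> simp
  calc |σ * x - ↑((σ : ℤ) * z)| = |(σ : ℝ)| * |x - z| := by
        push_cast; rw [← abs_mul, mul_sub]
    _ ≤ |x - z| := mul_le_of_le_one_left (abs_nonneg _) hσ
    _ ≤ δ := hz

lemma fwdDiff_iter {f : ℝ → ℝ} {y : ℝ} (n : ℕ) (h : ∀ k ≤ n, NearInt δ (f (y + k))) :
    NearInt (2 ^ n * δ) (Δ_[1] ^[n] f y) := by
  induction n generalizing f δ with
  | zero => simpa using h 0 le_rfl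
  | succ n ih =>
    rw [iterate_succ_apply, pow_succ, mul_assoc, two_mul]
    refine ih fun k hk => ?_
    have hk' := (h (k + 1) (by omega)).sub (h k (by omega))
    rwa [Nat.cast_succ, ← add_assoc] at hk'

end NearInt

lemma measurableSet_nearInt (δ : ℝ) : MeasurableSet {x | NearInt δ x} := by
  have : {x | NearInt δ x} = ⋃ z : ℤ, Metric.closedBall (z : ℝ) δ := by
    ext x
    simp [NearInt, Real.dist_eq]
  rw [this]
  exact .iUnion fun _ => Metric.isClosed_closedBall.measurableSet

lemma fwdDiff_iter_mul_add_pow {R : Type*} [CommRing R] (a b : R) (n : ℕ) :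
    Δ_[1] ^[n] (fun t : R => (b * t + a) ^ n) = fun _ => n ! * b ^ n := by
  have hsplit : (fun t : R => (b * t + a) ^ n) = b ^ n • (fun t : R => t ^ n) +
      fun t => ∑ k ∈ Finset.range n, (b ^ k * a ^ (n - k) * n.choose k) * t ^ k := by
    ext t
    simp only [add_pow, Finset.sum_range_succ, Pi.add_apply, Pi.smul_apply, smul_eq_mul,
      Nat.sub_self, pow_zero, Nat.choose_self, Nat.cast_one, mul_one, mul_pow]
    rw [add_comm]
    congr 1
    exact Finset.sum_congr rfl fun k _ => by ring
  rw [hsplit, fwdDiff_iter_add, fwdDiff_iter_const_smul, fwdDiff_iter_eq_factorial,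
    fwdDiff_iter_sum_mul_pow_eq_zero]
  ext
  simp [mul_comm]

def signedPowSumNearInt {d : ℕ} (p : ℕ) (δ : ℝ) : Set (Fin d → ℝ) :=
  {u | ∀ ε : Fin d → SignType, NearInt δ (∑ j, ((ε j : ℝ) * u j) ^ p)}

lemma measurableSet_signedPowSumNearInt {d : ℕ} (p : ℕ) (δ : ℝ) :
    MeasurableSet (signedPowSumNearInt (d := d) p δ) := by
  have : signedPowSumNearInt (d := d) p δ =
      ⋂ ε : Fin d → SignType, (fun u => ∑ j, ((ε j : ℝ) * u j) ^ p) ⁻¹' {x | NearInt δ x} := by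
    ext u
    simp [signedPowSumNearInt]
  rw [this]
  exact .iInter fun ε => (measurableSet_nearInt δ).preimage (by fun_prop)

/-- For `ε = sign ∘ s`, `t ↦ ∑ j, (ε j * (u + t • s) j) ^ p` is a polynomial of degree `p` with
leading coefficient `∑ j, |s j| ^ p`. -/
lemma nearInt_factorial_mul_sum_abs_pow {d p : ℕ} {δ : ℝ} {u s : Fin d → ℝ}
    (h : ∀ k ≤ p, u + (k : ℝ) • s ∈ signedPowSumNearInt p δ) :
    NearInt (2 ^ p * δ) (p ! * ∑ j, |s j| ^ p) := by
  set f : ℝ → ℝ := fun t => ∑ j, (SignType.sign (s j) * (u + t • s) j) ^ p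
  have hf : f = ∑ j, fun t => (|s j| * t + SignType.sign (s j) * u j) ^ p := by
    ext t
    simp only [f, Finset.sum_apply, Pi.add_apply, Pi.smul_apply, smul_eq_mul, ← sign_mul_self]
    exact Finset.sum_congr rfl fun j _ => by ring
  have hΔ : Δ_[1] ^[p] f 0 = p ! * ∑ j, |s j| ^ p := by
    rw [hf, fwdDiff_iter_finsetSum, Finset.sum_apply, Finset.mul_sum]
    exact Finset.sum_congr rfl fun j _ => by rw [fwdDiff_iter_mul_add_pow]
  rw [← hΔ]
  exact NearInt.fwdDiff_iter p fun k hk => by simpa [f] using h k hk (SignType.sign ∘ s)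

def weightedSum {m d : ℕ} (X : Fin m → Fin d → ℝ) : Fin d → ℝ :=
  ∑ i : Fin m, ((i : ℕ) + 1 : ℝ) • X i

lemma measurable_weightedSum {m d : ℕ} : Measurable (weightedSum (m := m) (d := d)) := by
  unfold weightedSum
  fun_prop

lemma weightedSum_update_add {m d : ℕ} (X : Fin m → Fin d → ℝ) (i : Fin m) (s : Fin d → ℝ) :
    weightedSum (update X i (X i + s)) = weightedSum X + ((i : ℕ) + 1 : ℝ) • s := by
  have hX : update X i (X i + s) = X + Pi.single i s := by
    ext i' : 1
    rcases eq_or_ne i' i with rfl | h <;> simp [*]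
  simp [weightedSum, hX, smul_add, Finset.sum_add_distrib, Pi.single_apply]

lemma add_natCast_smul_mem_of_update_mem {m d : ℕ} {B : Set (Fin d → ℝ)}
    {X : Fin m → Fin d → ℝ} {s : Fin d → ℝ} (hX : X ∈ weightedSum ⁻¹' B)
    (hupd : ∀ i, update X i (X i + s) ∈ weightedSum ⁻¹' B) {k : ℕ} (hk : k ≤ m) :
    weightedSum X + (k : ℝ) • s ∈ B := by
  rcases k with _ | j
  · simpa using hX
  · have := hupd ⟨j, hk⟩
    rwa [mem_preimage, weightedSum_update_add, Fin.val_mk, ← Nat.cast_succ] at this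

lemma lpNorm_nonneg {d : ℕ} (p : ℝ) (s : Fin d → ℝ) : 0 ≤ lpNorm p s :=
  Real.rpow_nonneg (Finset.sum_nonneg fun _ _ => by positivity) _

lemma lpNorm_natCast_pow {d p : ℕ} (hp : p ≠ 0) (s : Fin d → ℝ) :
    lpNorm (p : ℝ) s ^ p = ∑ j, |s j| ^ p := by
  simp only [_root_.lpNorm, Real.rpow_natCast, one_div]
  exact Real.rpow_inv_natCast_pow (Finset.sum_nonneg fun _ _ => by positivity) hp

def sideLengthGaps (p : ℕ) : Set ℝ :=
  ⋃ (n : ℕ) (_ : 1 ≤ n),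
    Ioo ((((4 * (n : ℝ) - 3) / (4 * (p.factorial : ℝ)))) ^ ((1 : ℝ) / p))
      ((((4 * (n : ℝ) - 1) / (4 * (p.factorial : ℝ)))) ^ ((1 : ℝ) / p))

lemma mem_sideLengthGaps_iff {p : ℕ} (hp : p ≠ 0) {lam : ℝ} (hlam : 0 ≤ lam) :
    lam ∈ sideLengthGaps p ↔
      ∃ n : ℕ, 1 ≤ n ∧ p ! * lam ^ p ∈ Ioo ((n : ℝ) - 3 / 4) ((n : ℝ) - 1 / 4) := by
  have hp' : (0 : ℝ) < p := Nat.cast_pos.mpr (Nat.pos_of_ne_zero hp)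
  have hfac : (0 : ℝ) < p ! := by positivity
  simp only [sideLengthGaps, mem_iUnion, mem_Ioo, exists_prop, one_div]
  refine exists_congr fun n => and_congr_right fun hn => ?_
  have hn' : (1 : ℝ) ≤ n := by exact_mod_cast hn
  have hlo : 0 ≤ (4 * (n : ℝ) - 3) / (4 * p !) := div_nonneg (by linarith) (by positivity)
  have hhi : 0 ≤ (4 * (n : ℝ) - 1) / (4 * p !) := div_nonneg (by linarith) (by positivity)
  rw [Real.rpow_inv_lt_iff_of_pos hlo hlam hp', Real.lt_rpow_inv_iff_of_pos hlam hhi hp',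
    Real.rpow_natCast, div_lt_iff₀ (by positivity), lt_div_iff₀ (by positivity)]
  constructor <;> rintro ⟨h1, h2⟩ <;> constructor <;> linarith

lemma notMem_sideLengthGaps {p : ℕ} (hp : p ≠ 0) {lam : ℝ} (hlam : 0 ≤ lam)
    (h : NearInt (1 / 4) (p ! * lam ^ p)) : lam ∉ sideLengthGaps p := by
  rw [mem_sideLengthGaps_iff hp hlam]
  rintro ⟨n, -, hlo, hhi⟩
  obtain ⟨z, hz⟩ := h
  obtain ⟨hz1, hz2⟩ := abs_le.mp hz
  have hzn : z < n := by exact_mod_cast (by linarith : (z : ℝ) < n)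
  have hnz : (n : ℤ) - 1 < z := by exact_mod_cast (by linarith : (n : ℝ) - 1 < z)
  omega

lemma exists_ge_mem_sideLengthGaps {p : ℕ} (hp : p ≠ 0) {lam₀ : ℝ} (hlam₀ : 0 ≤ lam₀) :
    ∃ lam, lam₀ ≤ lam ∧ lam ∈ sideLengthGaps p := by
  have hp' : (0 : ℝ) < p := Nat.cast_pos.mpr (Nat.pos_of_ne_zero hp)
  have hfac : (0 : ℝ) < p ! := by positivity
  set n := ⌈(p ! : ℝ) * lam₀ ^ p⌉₊ + 1
  have hn : (p ! : ℝ) * lam₀ ^ p + 1 ≤ n := by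
    push_cast [n]
    linarith [Nat.le_ceil ((p ! : ℝ) * lam₀ ^ p)]
  have hmid : 0 ≤ ((n : ℝ) - 1 / 2) / p ! :=
    div_nonneg (by linarith [mul_nonneg hfac.le (pow_nonneg hlam₀ p)]) hfac.le
  set lam := (((n : ℝ) - 1 / 2) / p !) ^ ((p : ℝ)⁻¹)
  have hlam_pow : p ! * lam ^ p = (n : ℝ) - 1 / 2 := by
    rw [Real.rpow_inv_natCast_pow hmid hp]
    field_simp
  refine ⟨lam, ?_, ?_⟩
  · rw [Real.le_rpow_inv_iff_of_pos hlam₀ hmid hp', Real.rpow_natCast, le_div_iff₀ hfac]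
    linarith
  · rw [mem_sideLengthGaps_iff hp (Real.rpow_nonneg hmid _)]
    refine ⟨n, by omega, ?_⟩
    rw [hlam_pow]
    constructor <;> linarith

def rootBands (r η : ℝ) : Set ℝ :=
  ⋃ n : ℕ, Icc ((n : ℝ) ^ r) (((n : ℝ) + η) ^ r)

lemma nearInt_pow_of_mem_rootBands {p : ℕ} (hp : p ≠ 0) {η x : ℝ} (hη : 0 ≤ η)
    (hx : x ∈ rootBands (p : ℝ)⁻¹ η) : NearInt η (x ^ p) := by
  obtain ⟨n, hlo, hhi⟩ := mem_iUnion.mp hx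
  have hx0 : 0 ≤ x := (Real.rpow_nonneg n.cast_nonneg _).trans hlo
  have hlo' := pow_le_pow_left₀ (Real.rpow_nonneg n.cast_nonneg _) hlo p
  have hhi' := pow_le_pow_left₀ hx0 hhi p
  rw [Real.rpow_inv_natCast_pow n.cast_nonneg hp] at hlo'
  rw [Real.rpow_inv_natCast_pow (by positivity) hp] at hhi'
  exact ⟨n, abs_le.mpr ⟨by push_cast; linarith, by push_cast; linarith⟩⟩

lemma pi_rootBands_subset_signedPowSumNearInt {d p : ℕ} (hp : p ≠ 0) {η : ℝ} (hη : 0 ≤ η) :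
    univ.pi (fun _ : Fin d => rootBands (p : ℝ)⁻¹ η) ⊆ signedPowSumNearInt p (d * η) := by
  intro u hu ε
  have := NearInt.finsetSum Finset.univ fun j _ =>
    (nearInt_pow_of_mem_rootBands hp hη (hu j trivial)).signType_mul (ε j ^ p)
  simpa [mul_pow] using this

lemma mul_add_one_rpow_sub_rpow_le {r x η : ℝ} (hr0 : 0 ≤ r) (hr1 : r ≤ 1) (hx : 0 ≤ x)
    (hη0 : 0 ≤ η) (hη1 : η ≤ 1) :
    η * ((x + 1) ^ r - x ^ r) ≤ (x + η) ^ r - x ^ r := by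
  have := (Real.concaveOn_rpow hr0 hr1).2 (mem_Ici.mpr hx) (mem_Ici.mpr (by linarith : 0 ≤ x + 1))
    (sub_nonneg.mpr hη1) hη0 (by ring)
  simp only [smul_eq_mul, show (1 - η) * x + η * (x + 1) = x + η by ring] at this
  linarith

lemma volume_biUnion_rootBands {r η : ℝ} (hr : 0 < r) (hη0 : 0 ≤ η) (hη1 : η < 1)
    (S : Finset ℕ) :
    volume (⋃ n ∈ S, Icc ((n : ℝ) ^ r) (((n : ℝ) + η) ^ r)) =
      ∑ n ∈ S, ENNReal.ofReal (((n : ℝ) + η) ^ r - (n : ℝ) ^ r) := by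
  have hdisj : Pairwise (Disjoint on fun n : ℕ => Icc ((n : ℝ) ^ r) (((n : ℝ) + η) ^ r)) := by
    refine (pairwise_disjoint_on _).2 fun n n' hnn' => disjoint_left.2 fun x hx hx' => ?_
    have hnn'' : (n : ℝ) + 1 ≤ n' := by exact_mod_cast hnn'
    have : ((n : ℝ) + η) ^ r < (n' : ℝ) ^ r := Real.rpow_lt_rpow (by positivity) (by linarith) hr
    linarith [hx.2, hx'.1]
  rw [measure_biUnion_finset (hdisj.set_pairwise _) fun _ _ => measurableSet_Icc]
  simp [Real.volume_Icc]

lemma le_ceil_rpow_inv_rpow {r a : ℝ} (hr : 0 < r) (ha : 0 ≤ a) :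
    a ≤ (⌈a ^ r⁻¹⌉₊ : ℝ) ^ r :=
  calc a = (a ^ r⁻¹) ^ r := (Real.rpow_inv_rpow ha hr.ne').symm
    _ ≤ (⌈a ^ r⁻¹⌉₊ : ℝ) ^ r := Real.rpow_le_rpow (by positivity) (Nat.le_ceil _) hr.le

lemma ceil_rpow_inv_rpow_le_add_one {r a : ℝ} (hr0 : 0 < r) (hr1 : r ≤ 1) (ha : 0 ≤ a) :
    (⌈a ^ r⁻¹⌉₊ : ℝ) ^ r ≤ a + 1 :=
  calc (⌈a ^ r⁻¹⌉₊ : ℝ) ^ r ≤ (a ^ r⁻¹ + 1) ^ r :=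
        Real.rpow_le_rpow (by positivity) (Nat.ceil_lt_add_one (by positivity)).le hr0.le
    _ ≤ (a ^ r⁻¹) ^ r + 1 ^ r := Real.rpow_add_le_add_rpow (by positivity) zero_le_one hr0.le hr1
    _ = a + 1 := by rw [Real.rpow_inv_rpow ha hr0.ne', Real.one_rpow]

lemma floor_rpow_inv_rpow_le {r a : ℝ} (hr : 0 < r) (ha : 0 ≤ a) :
    (⌊a ^ r⁻¹⌋₊ : ℝ) ^ r ≤ a :=
  calc (⌊a ^ r⁻¹⌋₊ : ℝ) ^ r ≤ (a ^ r⁻¹) ^ r :=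
        Real.rpow_le_rpow (by positivity) (Nat.floor_le (by positivity)) hr.le
    _ = a := Real.rpow_inv_rpow ha hr.ne'

lemma sub_one_le_floor_rpow_inv_rpow {r a : ℝ} (hr0 : 0 < r) (hr1 : r ≤ 1) (ha : 0 ≤ a) :
    a - 1 ≤ (⌊a ^ r⁻¹⌋₊ : ℝ) ^ r := by
  have : a ≤ (⌊a ^ r⁻¹⌋₊ : ℝ) ^ r + 1 :=
    calc a = (a ^ r⁻¹) ^ r := (Real.rpow_inv_rpow ha hr0.ne').symm
      _ ≤ ((⌊a ^ r⁻¹⌋₊ : ℝ) + 1) ^ r :=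
          Real.rpow_le_rpow (by positivity) (Nat.lt_floor_add_one _).le hr0.le
      _ ≤ (⌊a ^ r⁻¹⌋₊ : ℝ) ^ r + 1 ^ r :=
          Real.rpow_add_le_add_rpow (by positivity) zero_le_one hr0.le hr1
      _ = (⌊a ^ r⁻¹⌋₊ : ℝ) ^ r + 1 := by rw [Real.one_rpow]
  linarith

/-- Between consecutive roots `n ^ r` and `(n + 1) ^ r`, concavity makes the band of
`rootBands r η` take up at least a proportion `η`; the roots inside `[a, a + N]` span all of it
but at most a unit at either end. -/
lemma le_volume_rootBands_inter_Icc {r η a N : ℝ} (hr0 : 0 < r) (hr1 : r ≤ 1) (hη0 : 0 ≤ η)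
    (hη1 : η < 1) (ha : 0 ≤ a) (hN : 2 ≤ N) :
    ENNReal.ofReal (η * (N - 2)) ≤ volume (rootBands r η ∩ Icc a (a + N)) := by
  set g : ℕ → ℝ := fun n => (n : ℝ) ^ r
  have hg : StrictMono g := fun m n h =>
    Real.rpow_lt_rpow m.cast_nonneg (by exact_mod_cast h) hr0
  set n₀ := ⌈a ^ r⁻¹⌉₊
  set n₁ := ⌊(a + N) ^ r⁻¹⌋₊
  have ha₀ : a ≤ g n₀ := le_ceil_rpow_inv_rpow hr0 ha
  have h₀ : g n₀ ≤ a + 1 := ceil_rpow_inv_rpow_le_add_one hr0 hr1 ha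
  have h₁ : g n₁ ≤ a + N := floor_rpow_inv_rpow_le hr0 (by linarith)
  have h₁' : a + N - 1 ≤ g n₁ := sub_one_le_floor_rpow_inv_rpow hr0 hr1 (by linarith)
  have hn : n₀ ≤ n₁ := hg.le_iff_le.mp (by linarith)
  have hsub : (⋃ n ∈ Finset.Ico n₀ n₁, Icc ((n : ℝ) ^ r) (((n : ℝ) + η) ^ r)) ⊆
      rootBands r η ∩ Icc a (a + N) := by
    refine iUnion₂_subset fun n hn => fun x hx => ⟨mem_iUnion.2 ⟨n, hx⟩, ?_, ?_⟩
    · have := hg.monotone (Finset.mem_Ico.mp hn).1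
      linarith [hx.1]
    · have h1 : ((n : ℝ) + η) ^ r ≤ g (n + 1) := by
        push_cast [g]
        exact Real.rpow_le_rpow (by positivity) (by linarith) hr0.le
      have := hg.monotone (Finset.mem_Ico.mp hn).2
      linarith [hx.2]
  calc ENNReal.ofReal (η * (N - 2))
      ≤ ENNReal.ofReal (∑ n ∈ Finset.Ico n₀ n₁, η * (g (n + 1) - g n)) := by
        rw [← Finset.mul_sum, Finset.sum_Ico_sub g hn]
        exact ENNReal.ofReal_le_ofReal (mul_le_mul_of_nonneg_left (by linarith) hη0)
    _ ≤ ENNReal.ofReal (∑ n ∈ Finset.Ico n₀ n₁, (((n : ℝ) + η) ^ r - (n : ℝ) ^ r)) := by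
        refine ENNReal.ofReal_le_ofReal (Finset.sum_le_sum fun n _ => ?_)
        simpa [g] using mul_add_one_rpow_sub_rpow_le hr0.le hr1 n.cast_nonneg hη0 hη1.le
    _ = volume (⋃ n ∈ Finset.Ico n₀ n₁, Icc ((n : ℝ) ^ r) (((n : ℝ) + η) ^ r)) := by
        rw [volume_biUnion_rootBands hr0 hη0 hη1, ENNReal.ofReal_sum_of_nonneg fun n _ =>
          sub_nonneg.2 (Real.rpow_le_rpow n.cast_nonneg (by linarith) hr0.le)]
    _ ≤ volume (rootBands r η ∩ Icc a (a + N)) := measure_mono hsub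

lemma le_volume_Icc_inter_preimage_add {d p : ℕ} (hp : p ≠ 0) {η N : ℝ} (hη0 : 0 ≤ η)
    (hη1 : η < 1) (hN : 2 ≤ N) {w : Fin d → ℝ} (hw : 0 ≤ w) :
    ENNReal.ofReal (η * (N - 2)) ^ d ≤
      volume (Icc 0 (fun _ => N) ∩ (· + w) ⁻¹' signedPowSumNearInt p (d * η)) := by
  have hr0 : (0 : ℝ) < (p : ℝ)⁻¹ := inv_pos.mpr (Nat.cast_pos.mpr (Nat.pos_of_ne_zero hp))
  have hr1 : (p : ℝ)⁻¹ ≤ 1 :=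
    inv_le_one_of_one_le₀ (by exact_mod_cast Nat.one_le_iff_ne_zero.mpr hp)
  set R := rootBands (p : ℝ)⁻¹ η
  have hslice : ∀ j, ENNReal.ofReal (η * (N - 2)) ≤ volume (Icc 0 N ∩ (· + w j) ⁻¹' R) := by
    intro j
    have : Icc 0 N ∩ (· + w j) ⁻¹' R = (· + w j) ⁻¹' (R ∩ Icc (w j) (w j + N)) := by
      rw [preimage_inter, preimage_add_const_Icc, sub_self, add_sub_cancel_left, inter_comm]
    rw [this, measure_preimage_add_right]
    exact le_volume_rootBands_inter_Icc hr0 hr1 hη0 hη1 (hw j) hN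
  have hsub : (univ.pi fun j => Icc 0 N ∩ (· + w j) ⁻¹' R) ⊆
      Icc 0 (fun _ => N) ∩ (· + w) ⁻¹' signedPowSumNearInt p (d * η) := by
    intro v hv
    have hv' : ∀ j, v j ∈ Icc 0 N ∧ v j + w j ∈ R := fun j => hv j trivial
    exact ⟨⟨fun j => (hv' j).1.1, fun j => (hv' j).1.2⟩,
      pi_rootBands_subset_signedPowSumNearInt hp hη0 fun j _ => (hv' j).2⟩
  calc ENNReal.ofReal (η * (N - 2)) ^ d = ∏ _j : Fin d, ENNReal.ofReal (η * (N - 2)) := by simp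
    _ ≤ ∏ j, volume (Icc 0 N ∩ (· + w j) ⁻¹' R) := Finset.prod_le_prod' fun j _ => hslice j
    _ = volume (univ.pi fun j => Icc 0 N ∩ (· + w j) ⁻¹' R) := (volume_pi_pi _).symm
    _ ≤ _ := measure_mono hsub

lemma volume_eq_lintegral_volume_cons {E : Type*} [MeasureSpace E]
    [SigmaFinite (volume : Measure E)] {n : ℕ} {S : Set (Fin (n + 1) → E)} (hS : MeasurableSet S) :
    volume S = ∫⁻ Y : Fin n → E, volume {x : E | (Fin.cons x Y : Fin (n + 1) → E) ∈ S} := by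
  have e := (volume_preserving_piFinSuccAbove (fun _ : Fin (n + 1) => E) 0).symm
  rw [← e.measure_preimage hS.nullMeasurableSet, Measure.volume_eq_prod,
    Measure.prod_apply_symm (hS.preimage e.measurable)]
  simp [MeasurableEquiv.piFinSuccAbove_symm_apply]
  rfl

lemma weightedSum_cons {n d : ℕ} (x : Fin d → ℝ) (Y : Fin n → Fin d → ℝ) :
    weightedSum (Fin.cons x Y : Fin (n + 1) → Fin d → ℝ) =
      x + ∑ i : Fin n, ((i : ℕ) + 2 : ℝ) • Y i := by
  simp [weightedSum, Fin.sum_univ_succ, add_assoc, one_add_one_eq_two]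

lemma le_volume_preimage_weightedSum_inter_cube {n d : ℕ} {B : Set (Fin d → ℝ)}
    (hB : MeasurableSet B) {β : ℝ≥0∞} {N : ℝ}
    (hβ : ∀ w : Fin d → ℝ, 0 ≤ w → β ≤ volume (Icc 0 (fun _ => N) ∩ (· + w) ⁻¹' B)) :
    β * ENNReal.ofReal N ^ (n * d) ≤
      volume (weightedSum ⁻¹' B ∩ univ.pi fun _ : Fin (n + 1) => Icc 0 fun _ => N) := by
  set cube : Set (Fin n → Fin d → ℝ) := univ.pi fun _ => Icc 0 fun _ => N
  have hcube : volume cube = ENNReal.ofReal N ^ (n * d) := by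
    rw [volume_pi_pi]
    simp [Real.volume_Icc_pi, pow_mul']
  have hS : MeasurableSet (weightedSum ⁻¹' B ∩ univ.pi fun _ : Fin (n + 1) => Icc 0 fun _ => N) :=
    (measurable_weightedSum hB).inter (.univ_pi fun _ => measurableSet_Icc)
  have hslice : ∀ Y ∈ cube, β ≤ volume {x | (Fin.cons x Y : Fin (n + 1) → Fin d → ℝ) ∈
      weightedSum ⁻¹' B ∩ univ.pi fun _ : Fin (n + 1) => Icc 0 fun _ => N} := by
    intro Y hY
    have hw : 0 ≤ ∑ i : Fin n, ((i : ℕ) + 2 : ℝ) • Y i :=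
      Finset.sum_nonneg fun i _ => smul_nonneg (by positivity) (hY i trivial).1
    convert hβ _ hw using 2
    ext x
    have hY' : ∀ i, Y i ∈ Icc 0 fun _ => N := fun i => hY i trivial
    simp only [mem_inter_iff, mem_preimage, weightedSum_cons, Set.mem_pi, mem_univ, true_implies,
      Fin.forall_fin_succ, Fin.cons_zero, Fin.cons_succ, mem_ofPred_eq]
    tauto
  calc β * ENNReal.ofReal N ^ (n * d) = ∫⁻ _ in cube, β := by rw [setLIntegral_const, hcube]
    _ ≤ ∫⁻ Y in cube, volume {x | (Fin.cons x Y : Fin (n + 1) → Fin d → ℝ) ∈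
          weightedSum ⁻¹' B ∩ univ.pi fun _ : Fin (n + 1) => Icc 0 fun _ => N} :=
        setLIntegral_mono' (.univ_pi fun _ => measurableSet_Icc) hslice
    _ ≤ _ := setLIntegral_le_lintegral _ _
    _ = _ := (volume_eq_lintegral_volume_cons hS).symm

lemma le_upperBanachDensityPi {m d : ℕ} {A : Set (Fin m → Fin d → ℝ)} {c : ℝ≥0∞}
    (x : Fin m → Fin d → ℝ)
    (h : ∀ᶠ N in atTop, c * ENNReal.ofReal N ^ (m * d) ≤
      volume (A ∩ {y | ∀ i, y i ∈ Icc (x i) (x i + fun _ => N)})) :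
    c ≤ upperBanachDensityPi m d A := by
  refine le_limsup_of_frequently_le'
    ((h.and (eventually_gt_atTop 0)).mono fun N hN => le_iSup_of_le x ?_).frequently
  rw [ENNReal.ofReal_pow hN.2.le, ENNReal.le_div_iff_mul_le
    (Or.inl (pow_ne_zero _ (ENNReal.ofReal_pos.2 hN.2).ne'))
    (Or.inl (ENNReal.pow_ne_top ENNReal.ofReal_ne_top))]
  exact hN.1

lemma upperBanachDensityPi_preimage_weightedSum_pos {m d p : ℕ} (hm : m ≠ 0) (hp : p ≠ 0)
    {η : ℝ} (hη0 : 0 < η) (hη1 : η < 1) :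
    0 < upperBanachDensityPi m d (weightedSum ⁻¹' signedPowSumNearInt p (d * η)) := by
  obtain ⟨n, rfl⟩ := Nat.exists_eq_succ_of_ne_zero hm
  refine (ENNReal.pow_pos (ENNReal.ofReal_pos.2 (half_pos hη0)) d).trans_le
    (le_upperBanachDensityPi 0 ?_)
  filter_upwards [eventually_ge_atTop 4] with N hN
  have hbox : {y : Fin (n + 1) → Fin d → ℝ | ∀ i, y i ∈ Icc ((0 : Fin (n + 1) → Fin d → ℝ) i)
      ((0 : Fin (n + 1) → Fin d → ℝ) i + fun _ => N)} = univ.pi fun _ => Icc 0 fun _ => N := by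
    ext
    simp only [mem_ofPred_eq, Set.mem_pi, mem_univ, true_implies, Pi.zero_apply, zero_add]
  rw [hbox]
  calc ENNReal.ofReal (η / 2) ^ d * ENNReal.ofReal N ^ ((n + 1) * d)
      = (ENNReal.ofReal (η / 2) * ENNReal.ofReal N) ^ d * ENNReal.ofReal N ^ (n * d) := by ring
    _ ≤ ENNReal.ofReal (η * (N - 2)) ^ d * ENNReal.ofReal N ^ (n * d) := by
        rw [← ENNReal.ofReal_mul (by linarith)]
        gcongr ENNReal.ofReal ?_ ^ d * _
        nlinarith
    _ ≤ _ := le_volume_preimage_weightedSum_inter_cube (measurableSet_signedPowSumNearInt p _)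
        fun w hw => le_volume_Icc_inter_preimage_add hp hη0.le hη1 (by linarith) hw

theorem counterexample_generalized_corners_general (d k p : ℕ)
    (hp : 1 ≤ p) (hpk : p ≤ k - 1) :
    ∃ A : Set (Fin (k - 1) → Fin d → ℝ), MeasurableSet A ∧
      0 < upperBanachDensityPi (k - 1) d A ∧
      (∀ (X : Fin (k - 1) → Fin d → ℝ) (s : Fin d → ℝ),
        X ∈ A → (∀ i : Fin (k - 1), Function.update X i (X i + s) ∈ A) →
        lpNorm (p : ℝ) s ∉
          ⋃ (n : ℕ) (_ : 1 ≤ n),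
            Set.Ioo ((((4 * (n : ℝ) - 3) / (4 * (p.factorial : ℝ)))) ^ ((1 : ℝ) / p))
              ((((4 * (n : ℝ) - 1) / (4 * (p.factorial : ℝ)))) ^ ((1 : ℝ) / p))) ∧
      (∀ lam0 : ℝ, 0 < lam0 → ∃ lam : ℝ, lam0 ≤ lam ∧
        ¬ ∃ (X : Fin (k - 1) → Fin d → ℝ) (s : Fin d → ℝ), s ≠ 0 ∧
            X ∈ A ∧ (∀ i : Fin (k - 1), Function.update X i (X i + s) ∈ A) ∧
            lpNorm (p : ℝ) s = lam) := by
  have hp0 : p ≠ 0 := Nat.one_le_iff_ne_zero.mp hp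
  set η : ℝ := (2 ^ (p + 2) * ((d : ℝ) + 1))⁻¹
  have hη0 : 0 < η := by positivity
  have hη1 : η < 1 :=
    inv_lt_one_of_one_lt₀ (one_lt_mul_of_lt_of_le (one_lt_pow₀ one_lt_two (by omega)) (by simp))
  have hprec : 2 ^ p * (d * η) ≤ 1 / 4 := by
    simp only [η, pow_add]
    field_simp
    linarith
  have hcorner : ∀ (X : Fin (k - 1) → Fin d → ℝ) (s : Fin d → ℝ),
      X ∈ weightedSum ⁻¹' signedPowSumNearInt p (d * η) →
      (∀ i, update X i (X i + s) ∈ weightedSum ⁻¹' signedPowSumNearInt p (d * η)) →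
      lpNorm (p : ℝ) s ∉ sideLengthGaps p := by
    intro X s hX hupd
    refine notMem_sideLengthGaps hp0 (lpNorm_nonneg _ s) ?_
    rw [lpNorm_natCast_pow hp0]
    exact (nearInt_factorial_mul_sum_abs_pow fun j hj =>
      add_natCast_smul_mem_of_update_mem hX hupd (hj.trans hpk)).mono hprec
  refine ⟨_, measurable_weightedSum (measurableSet_signedPowSumNearInt p _),
    upperBanachDensityPi_preimage_weightedSum_pos (by omega) hp0 hη0 hη1, hcorner, ?_⟩
  intro lam0 hlam0
  obtain ⟨lam, hle, hgap⟩ := exists_ge_mem_sideLengthGaps hp0 hlam0.le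
  exact ⟨lam, hle, fun ⟨X, s, _, hX, hupd, hs⟩ => hcorner X s hX hupd (hs ▸ hgap)⟩

theorem counterexample_generalized_corners (d k p : ℕ)
    (hd : 1 ≤ d) (hk : 1 ≤ k) (hp : 1 ≤ p) (hpk : p ≤ k - 1) :
    ∃ A : Set (Fin (k - 1) → Fin d → ℝ), MeasurableSet A ∧
      0 < upperBanachDensityPi (k - 1) d A ∧
      (∀ (X : Fin (k - 1) → Fin d → ℝ) (s : Fin d → ℝ),
        X ∈ A → (∀ i : Fin (k - 1), Function.update X i (X i + s) ∈ A) →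
        lpNorm (p : ℝ) s ∉
          ⋃ (n : ℕ) (_ : 1 ≤ n),
            Set.Ioo ((((4 * (n : ℝ) - 3) / (4 * (p.factorial : ℝ)))) ^ ((1 : ℝ) / p))
              ((((4 * (n : ℝ) - 1) / (4 * (p.factorial : ℝ)))) ^ ((1 : ℝ) / p))) ∧
      (∀ lam0 : ℝ, 0 < lam0 → ∃ lam : ℝ, lam0 ≤ lam ∧
        ¬ ∃ (X : Fin (k - 1) → Fin d → ℝ) (s : Fin d → ℝ), s ≠ 0 ∧
            X ∈ A ∧ (∀ i : Fin (k - 1), Function.update X i (X i + s) ∈ A) ∧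
            lpNorm (p : ℝ) s = lam) :=
  counterexample_generalized_corners_general d k p hp hpk
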